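/- arXiv:2201.11477 — 4 statements merged into one kernel-verified Lean document; each statement's English description precedes it below -/
import Mathlib

section
/- Let S₀ be a convex subset of a real vector space, and let f : S₀ → ℝ satisfy: for all ρ, σ ∈ S₀ and p ∈ [0,1], f(pρ + (1−p)σ) ≥ p f(ρ) + (1−p) f(σ) − a(p) and f(pρ + (1−p)σ) ≤ p f(ρ) + (1−p) f(σ) + b(p), where a, b : [0,1] → [0,∞) vanish at 0 and are nondecreasing on [0, 1/2]. Suppose ρ, σ, τ₊, τ₋, ω ∈ S₀ satisfy ω = (1/(1+ε))ρ + (ε/(1+ε))τ₋ = (1/(1+ε))σ + (ε/(1+ε))τ₊ for some ε ∈ (0,1]. Then with p = ε/(1+ε), one has |f(ρ) − f(σ)| ≤ (p/(1−p))·|f(τ₊) − f(τ₋)| + (a(p)+b(p))/(1−p). -/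
/-!
Write `p = ε/(1+ε)`, so that `ω = p τ₋ + (1-p) ρ = p τ₊ + (1-p) σ`. Almost-concavity of `f` along
the first decomposition bounds `(1-p) f ρ` above by `f ω - p f τ₋ + a p`, and almost-convexity
along the second bounds `(1-p) f σ` below by `f ω - p f τ₊ - b p`. Subtracting eliminates `f ω`,
and exchanging the roles of the two decompositions gives the other sign.
-/

section AlmostAffine

variable {V : Type*} [AddCommGroup V] [Module ℝ V]

def AlmostConcaveOn (s : Set V) (f : V → ℝ) (a : ℝ → ℝ) : Prop :=
  ∀ x ∈ s, ∀ y ∈ s, ∀ p ∈ Set.Icc (0 : ℝ) 1,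
    p * f x + (1 - p) * f y - a p ≤ f (p • x + (1 - p) • y)

def AlmostConvexOn (s : Set V) (f : V → ℝ) (b : ℝ → ℝ) : Prop :=
  ∀ x ∈ s, ∀ y ∈ s, ∀ p ∈ Set.Icc (0 : ℝ) 1,
    f (p • x + (1 - p) • y) ≤ p * f x + (1 - p) * f y + b p

variable {s : Set V} {f : V → ℝ} {a b : ℝ → ℝ} {ρ σ τp τm : V} {p : ℝ}

theorem one_sub_mul_sub_le_of_mix_eq (hfa : AlmostConcaveOn s f a) (hfb : AlmostConvexOn s f b)
    (hρ : ρ ∈ s) (hσ : σ ∈ s) (hτp : τp ∈ s) (hτm : τm ∈ s) (hp : p ∈ Set.Icc (0 : ℝ) 1)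
    (hmix : p • τm + (1 - p) • ρ = p • τp + (1 - p) • σ) :
    (1 - p) * (f ρ - f σ) ≤ p * (f τp - f τm) + (a p + b p) := by
  have hconcave := hfa τm hτm ρ hρ p hp
  have hconvex := hfb τp hτp σ hσ p hp
  rw [hmix] at hconcave
  linarith

theorem one_sub_mul_abs_sub_le_of_mix_eq (hfa : AlmostConcaveOn s f a)
    (hfb : AlmostConvexOn s f b)
    (hρ : ρ ∈ s) (hσ : σ ∈ s) (hτp : τp ∈ s) (hτm : τm ∈ s) (hp : p ∈ Set.Icc (0 : ℝ) 1)
    (hmix : p • τm + (1 - p) • ρ = p • τp + (1 - p) • σ) :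
    (1 - p) * |f ρ - f σ| ≤ p * |f τp - f τm| + (a p + b p) := by
  have hle := one_sub_mul_sub_le_of_mix_eq hfa hfb hρ hσ hτp hτm hp hmix
  have hge := one_sub_mul_sub_le_of_mix_eq hfa hfb hσ hρ hτm hτp hp hmix.symm
  have habs : p * |f τp - f τm| = |p * (f τp - f τm)| := by
    rw [abs_mul, abs_of_nonneg hp.1]
  rw [← abs_of_nonneg (sub_nonneg.2 hp.2), ← abs_mul, habs, abs_le]
  constructor <;> linarith [le_abs_self (p * (f τp - f τm)), neg_abs_le (p * (f τp - f τm))]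

end AlmostAffine

theorem stmt_3_general {V : Type*} [AddCommGroup V] [Module ℝ V]
    (S₀ : Set V)
    (f : V → ℝ) (a b : ℝ → ℝ)
    (hLAA1 : ∀ ρ ∈ S₀, ∀ σ ∈ S₀, ∀ p ∈ Set.Icc (0 : ℝ) 1,
      p * f ρ + (1 - p) * f σ - a p ≤ f (p • ρ + (1 - p) • σ))
    (hLAA2 : ∀ ρ ∈ S₀, ∀ σ ∈ S₀, ∀ p ∈ Set.Icc (0 : ℝ) 1,
      f (p • ρ + (1 - p) • σ) ≤ p * f ρ + (1 - p) * f σ + b p)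
    (ρ σ τp τm ω : V)
    (hρ : ρ ∈ S₀) (hσ : σ ∈ S₀) (hτp : τp ∈ S₀) (hτm : τm ∈ S₀)
    (ε : ℝ) (hε : ε ∈ Set.Ioc (0 : ℝ) 1)
    (hdec1 : ω = (1 / (1 + ε)) • ρ + (ε / (1 + ε)) • τm)
    (hdec2 : ω = (1 / (1 + ε)) • σ + (ε / (1 + ε)) • τp) :
    |f ρ - f σ| ≤
      (ε / (1 + ε)) / (1 - ε / (1 + ε)) * |f τp - f τm| +
        (a (ε / (1 + ε)) + b (ε / (1 + ε))) / (1 - ε / (1 + ε)) := by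
  obtain ⟨hε0, hε1⟩ := hε
  set p := ε / (1 + ε) with hp_def
  have hcompl : 1 - p = 1 / (1 + ε) := by rw [hp_def]; field_simp; ring
  have hp : p ∈ Set.Icc (0 : ℝ) 1 := ⟨by positivity, by rw [div_le_one (by linarith)]; linarith⟩
  have hpos : 0 < 1 - p := by rw [hcompl]; positivity
  have hmix : p • τm + (1 - p) • ρ = p • τp + (1 - p) • σ := by
    rw [hcompl, add_comm, ← hdec1, add_comm, ← hdec2]
  have key := one_sub_mul_abs_sub_le_of_mix_eq hLAA1 hLAA2 hρ hσ hτp hτm hp hmix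
  rw [div_mul_eq_mul_div, ← add_div, le_div_iff₀ hpos]
  linarith

/-- Core step of the Alicki–Fannes–Winter method: if `f` satisfies the LAA inequalities on a
convex set `S₀` and `ω = (1/(1+ε))ρ + (ε/(1+ε))τ₋ = (1/(1+ε))σ + (ε/(1+ε))τ₊`, then with
`p = ε/(1+ε)` one has
`|f ρ − f σ| ≤ (p/(1−p))·|f τ₊ − f τ₋| + (a p + b p)/(1−p)`. -/
theorem stmt_3 {V : Type*} [AddCommGroup V] [Module ℝ V]
    (S₀ : Set V) (hconv : Convex ℝ S₀)
    (f : V → ℝ) (a b : ℝ → ℝ)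
    (ha0 : a 0 = 0) (hb0 : b 0 = 0)
    (hapos : ∀ p ∈ Set.Icc (0 : ℝ) 1, 0 ≤ a p)
    (hbpos : ∀ p ∈ Set.Icc (0 : ℝ) 1, 0 ≤ b p)
    (hamono : MonotoneOn a (Set.Icc 0 (1 / 2)))
    (hbmono : MonotoneOn b (Set.Icc 0 (1 / 2)))
    (hLAA1 : ∀ ρ ∈ S₀, ∀ σ ∈ S₀, ∀ p ∈ Set.Icc (0 : ℝ) 1,
      p * f ρ + (1 - p) * f σ - a p ≤ f (p • ρ + (1 - p) • σ))
    (hLAA2 : ∀ ρ ∈ S₀, ∀ σ ∈ S₀, ∀ p ∈ Set.Icc (0 : ℝ) 1,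
      f (p • ρ + (1 - p) • σ) ≤ p * f ρ + (1 - p) * f σ + b p)
    (ρ σ τp τm ω : V)
    (hρ : ρ ∈ S₀) (hσ : σ ∈ S₀) (hτp : τp ∈ S₀) (hτm : τm ∈ S₀) (hω : ω ∈ S₀)
    (ε : ℝ) (hε : ε ∈ Set.Ioc (0 : ℝ) 1)
    (hdec1 : ω = (1 / (1 + ε)) • ρ + (ε / (1 + ε)) • τm)
    (hdec2 : ω = (1 / (1 + ε)) • σ + (ε / (1 + ε)) • τp) :
    |f ρ - f σ| ≤
      (ε / (1 + ε)) / (1 - ε / (1 + ε)) * |f τp - f τm| +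
        (a (ε / (1 + ε)) + b (ε / (1 + ε))) / (1 - ε / (1 + ε)) :=
  stmt_3_general S₀ f a b hLAA1 hLAA2 ρ σ τp τm ω hρ hσ hτp hτm ε hε hdec1 hdec2
end

section
/- For any two quantum states ρ and σ on a finite-dimensional Hilbert space, with fidelity F(ρ,σ) = (Tr√(√ρ σ √ρ))², the following inequalities hold: 1 − √F(ρ,σ) ≤ (1/2)‖ρ − σ‖₁ ≤ √(1 − F(ρ,σ)). -/
open scoped ComplexOrder

/-- The square root of a positive semidefinite matrix, as defined in the older Mathlib. -/
noncomputable def Matrix.PosSemidef.sqrt {n : Type*} [Fintype n] [DecidableEq n] {A : Matrix n n ℂ}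
    (hA : A.PosSemidef) : Matrix n n ℂ :=
  hA.1.eigenvectorUnitary.1 * Matrix.diagonal ((↑) ∘ (√·) ∘ hA.1.eigenvalues) *
    (star hA.1.eigenvectorUnitary : Matrix n n ℂ)

/-- The trace norm `‖A‖₁ = Tr √(Aᴴ A)` of a complex matrix. -/
noncomputable def traceNorm {n : Type*} [Fintype n] [DecidableEq n] (A : Matrix n n ℂ) : ℝ :=
  ((Matrix.posSemidef_conjTranspose_mul_self A).sqrt).trace.re

/-- The Uhlmann fidelity `F(ρ,σ) = ‖√ρ √σ‖₁²`. -/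
noncomputable def fidelity {n : Type*} [Fintype n] [DecidableEq n]
    {ρ σ : Matrix n n ℂ} (hρ : ρ.PosSemidef) (hσ : σ.PosSemidef) : ℝ :=
  traceNorm (hρ.sqrt * hσ.sqrt) ^ 2

/-!
The trace norm is `‖M‖₁ = max_U Re tr (U M)` over unitaries `U`, as a singular value
decomposition shows; this gives the triangle inequality and `‖X Y‖₁ ≤ ‖X‖₂ ‖Y‖₂`.
Write `A = √ρ`, `B = √σ`, so that `√F = ‖A B‖₁ ≥ Re tr (A B)`.

The lower bound is the Powers–Størmer inequality `tr (A - B)² ≤ ‖A² - B²‖₁`, read off in an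
eigenbasis of `A - B`, since `tr (A - B)² = 2 - 2 Re tr (A B)`.

For the upper bound let `P` project onto the positive part of `ρ - σ`, `p = tr (P ρ)` and
`q = tr (P σ)`. Then `½‖ρ - σ‖₁ = p - q`, and splitting `A B = A P B + A (1 - P) B` bounds `√F`
by the Bhattacharyya coefficient `√(p q) + √((1 - p)(1 - q))` of two Bernoulli distributions, for
which `(p - q)² + (√(p q) + √((1 - p)(1 - q)))² ≤ 1` is elementary.
-/

namespace Matrix.PosSemidef

open scoped MatrixOrder

variable {n : Type*} [Fintype n] [DecidableEq n] {A : Matrix n n ℂ}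

lemma sqrt_eq_cfcSqrt (hA : A.PosSemidef) : hA.sqrt = CFC.sqrt A := by
  rw [CFC.sqrt_eq_real_sqrt A hA.nonneg, cfcₙ_eq_cfc, hA.1.cfc_eq]
  rfl

lemma posSemidef_sqrt (hA : A.PosSemidef) : hA.sqrt.PosSemidef := by
  rw [sqrt_eq_cfcSqrt]
  exact nonneg_iff_posSemidef.mp (CFC.sqrt_nonneg A)

lemma sqrt_mul_self (hA : A.PosSemidef) : hA.sqrt * hA.sqrt = A := by
  rw [sqrt_eq_cfcSqrt]
  exact CFC.sqrt_mul_sqrt_self A hA.nonneg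

lemma sqrt_eq_of_mul_self_eq {B : Matrix n n ℂ} (hB : B.PosSemidef) (hA : A.PosSemidef)
    (h : A * A = B) : hB.sqrt = A := by
  rw [sqrt_eq_cfcSqrt, CFC.sqrt_eq_iff B A hB.nonneg hA.nonneg, h]

end Matrix.PosSemidef

namespace Matrix

variable {n : Type*} [Fintype n]

lemma trace_mul_mul_star_of_mem_unitaryGroup [DecidableEq n] {V : Matrix n n ℂ}
    (hV : V ∈ unitaryGroup n ℂ) (D : Matrix n n ℂ) : (V * D * star V).trace = D.trace := by
  rw [trace_mul_cycle, mem_unitaryGroup_iff'.mp hV, one_mul]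

lemma diagonal_mem_unitaryGroup [DecidableEq n] {d : n → ℂ} (hd : ∀ i, ‖d i‖ = 1) :
    diagonal d ∈ unitaryGroup n ℂ := by
  rw [mem_unitaryGroup_iff, star_eq_conjTranspose, diagonal_conjTranspose, diagonal_mul_diagonal,
    ← diagonal_one]
  congr 1
  funext i
  rw [Pi.star_apply, Complex.star_def, Complex.mul_conj, Complex.normSq_eq_norm_sq, hd i]
  simp

lemma re_trace_mul_nonneg_of_isStarProjection {P A : Matrix n n ℂ} (hP : IsStarProjection P)
    (hA : A.PosSemidef) : 0 ≤ (P * A).trace.re := by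
  have hPH : Pᴴ = P := hP.isSelfAdjoint
  have hPAP : (P * A).trace = (Pᴴ * A * P).trace := by
    rw [trace_mul_cycle, hPH, hP.isIdempotentElem.eq]
  exact hPAP ▸ (Complex.nonneg_iff.mp (hA.conjTranspose_mul_mul_same P).trace_nonneg).1

lemma exists_mem_unitaryGroup_eq_mul_diagonal [DecidableEq n] {X : Matrix n n ℂ} {s : n → ℝ}
    (hX : Xᴴ * X = diagonal (fun i => (s i : ℂ) ^ 2)) :
    ∃ W ∈ unitaryGroup n ℂ, X = W * diagonal (fun i => (s i : ℂ)) := by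
  let col : n → EuclideanSpace ℂ n := fun i => WithLp.toLp 2 (fun k => X k i)
  have inner_col (i j : n) :
      inner ℂ (col i) (col j) = if i = j then (s i : ℂ) ^ 2 else 0 := by
    have := congrFun (congrFun hX i) j
    simp only [mul_apply, conjTranspose_apply, diagonal_apply] at this
    rw [← this]
    simp [col, PiLp.inner_apply, mul_comm]
  let v : n → EuclideanSpace ℂ n := fun i => (((s i)⁻¹ : ℝ) : ℂ) • col i
  have hv : Orthonormal ℂ ({i | s i ≠ 0}.domRestrict v) := by
    rw [orthonormal_iff_ite]
    rintro ⟨i, hi⟩ ⟨j, hj⟩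
    simp only [Set.domRestrict_apply, v, inner_smul_left, inner_smul_right, inner_col,
      Subtype.mk.injEq]
    split_ifs with hij
    · subst hij
      have : (s i : ℂ) ≠ 0 := by exact_mod_cast hi
      rw [Complex.conj_ofReal]
      push_cast
      field_simp
    · simp
  obtain ⟨b, hb⟩ := hv.exists_orthonormalBasis_extension_of_card_eq (by simp)
  refine ⟨(EuclideanSpace.basisFun n ℂ).toBasis.toMatrix b,
    (EuclideanSpace.basisFun n ℂ).toMatrix_orthonormalBasis_mem_unitary b, ?_⟩
  ext k i
  rw [mul_diagonal]
  by_cases hi : s i = 0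
  · have : col i = 0 := inner_self_eq_zero.mp (by rw [inner_col]; simp [hi])
    simpa [hi, col] using congrArg (· k) this
  · have hW : (EuclideanSpace.basisFun n ℂ).toBasis.toMatrix b k i = (s i : ℂ)⁻¹ * X k i := by
      simp [Module.Basis.toMatrix_apply, hb i hi, v, col]
    have : (s i : ℂ) ≠ 0 := by exact_mod_cast hi
    rw [hW]
    field_simp

end Matrix

section TraceNorm

open Matrix

variable {n : Type*} [Fintype n] [DecidableEq n]

lemma Matrix.exists_svd (M : Matrix n n ℂ) :
    ∃ W ∈ unitaryGroup n ℂ, ∃ V ∈ unitaryGroup n ℂ, ∃ s : n → ℝ, (∀ i, 0 ≤ s i) ∧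
      M = W * diagonal (fun i => (s i : ℂ)) * star V := by
  have hMM := (posSemidef_conjTranspose_mul_self M).1
  set V : Matrix n n ℂ := (hMM.eigenvectorUnitary : Matrix n n ℂ)
  have hV : V ∈ unitaryGroup n ℂ := hMM.eigenvectorUnitary.2
  have hMV : (M * V)ᴴ * (M * V) = diagonal (fun i => (√(hMM.eigenvalues i) : ℂ) ^ 2) := by
    have hdiag := hMM.conjStarAlgAut_star_eigenvectorUnitary
    rw [Unitary.conjStarAlgAut_star_apply] at hdiag
    rw [conjTranspose_mul, ← star_eq_conjTranspose V, mul_assoc, ← mul_assoc Mᴴ, ← mul_assoc,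
      hdiag]
    congr 1
    funext i
    rw [← Complex.ofReal_pow, Real.sq_sqrt (eigenvalues_conjTranspose_mul_self_nonneg M i)]
    rfl
  obtain ⟨W, hW, hMVW⟩ := exists_mem_unitaryGroup_eq_mul_diagonal hMV
  refine ⟨W, hW, V, hV, fun i => √(hMM.eigenvalues i), fun i => Real.sqrt_nonneg _, ?_⟩
  rw [← hMVW, mul_assoc, mem_unitaryGroup_iff.mp hV, mul_one]

lemma traceNorm_eq_sum_of_eq_mul_diagonal_mul {M W V : Matrix n n ℂ} (hW : W ∈ unitaryGroup n ℂ)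
    (hV : V ∈ unitaryGroup n ℂ) {s : n → ℝ} (hs : ∀ i, 0 ≤ s i)
    (hM : M = W * diagonal (fun i => (s i : ℂ)) * star V) :
    traceNorm M = ∑ i, s i := by
  set D : Matrix n n ℂ := diagonal (fun i => (s i : ℂ))
  have hD : D.PosSemidef :=
    posSemidef_diagonal_iff.mpr fun i => Complex.zero_le_real.mpr (hs i)
  have hVDV : (V * D * star V) * (V * D * star V) = Mᴴ * M := by
    have hDH : Dᴴ = D := hD.1
    rw [hM, conjTranspose_mul, conjTranspose_mul, ← star_eq_conjTranspose (star V), star_star,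
      hDH, ← star_eq_conjTranspose W]
    simp only [mul_assoc]
    rw [← mul_assoc (star V) V, ← mul_assoc (star W) W, mem_unitaryGroup_iff'.mp hV,
      mem_unitaryGroup_iff'.mp hW]
  have hsqrt := (posSemidef_conjTranspose_mul_self M).sqrt_eq_of_mul_self_eq
    (hD.mul_mul_conjTranspose_same V) hVDV
  rw [traceNorm, hsqrt, ← star_eq_conjTranspose, trace_mul_mul_star_of_mem_unitaryGroup hV,
    trace_diagonal, Complex.re_sum]
  simp

lemma traceNorm_nonneg (M : Matrix n n ℂ) : 0 ≤ traceNorm M := by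
  obtain ⟨W, hW, V, hV, s, hs, hM⟩ := M.exists_svd
  rw [traceNorm_eq_sum_of_eq_mul_diagonal_mul hW hV hs hM]
  exact Finset.sum_nonneg fun i _ => hs i

lemma re_trace_mul_le_traceNorm {U : Matrix n n ℂ} (hU : U ∈ unitaryGroup n ℂ)
    (M : Matrix n n ℂ) : (U * M).trace.re ≤ traceNorm M := by
  obtain ⟨W, hW, V, hV, s, hs, hM⟩ := M.exists_svd
  rw [traceNorm_eq_sum_of_eq_mul_diagonal_mul hW hV hs hM, hM]
  set Y := star V * U * W
  have hY : Y ∈ unitaryGroup n ℂ := mul_mem (mul_mem (Unitary.star_mem hV) hU) hW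
  have htr : (U * (W * diagonal (fun i => (s i : ℂ)) * star V)).trace
      = (Y * diagonal (fun i => (s i : ℂ))).trace := by
    rw [← mul_assoc, trace_mul_cycle]
    simp only [Y, mul_assoc]
  rw [htr, trace, Complex.re_sum]
  refine Finset.sum_le_sum fun i _ => ?_
  calc ((Y * diagonal (fun i => (s i : ℂ))).diag i).re
      ≤ ‖Y i i * (s i : ℂ)‖ := by rw [diag_apply, mul_diagonal]; exact Complex.re_le_norm _
    _ ≤ s i := by
      rw [norm_mul, Complex.norm_real, Real.norm_of_nonneg (hs i)]
      exact mul_le_of_le_one_left (hs i) (entry_norm_bound_of_unitary hY i i)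

lemma exists_re_trace_mul_eq_traceNorm (M : Matrix n n ℂ) :
    ∃ U ∈ unitaryGroup n ℂ, (U * M).trace.re = traceNorm M := by
  obtain ⟨W, hW, V, hV, s, hs, hM⟩ := M.exists_svd
  refine ⟨V * star W, mul_mem hV (Unitary.star_mem hW), ?_⟩
  have hUM : V * star W * M = V * diagonal (fun i => (s i : ℂ)) * star V := by
    rw [hM]
    simp only [mul_assoc]
    rw [← mul_assoc (star W) W, mem_unitaryGroup_iff'.mp hW, one_mul]
  rw [traceNorm_eq_sum_of_eq_mul_diagonal_mul hW hV hs hM, hUM,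
    trace_mul_mul_star_of_mem_unitaryGroup hV, trace_diagonal, Complex.re_sum]
  simp

lemma re_trace_le_traceNorm (M : Matrix n n ℂ) : M.trace.re ≤ traceNorm M := by
  simpa using re_trace_mul_le_traceNorm (one_mem (unitaryGroup n ℂ)) M

lemma traceNorm_add_le (A B : Matrix n n ℂ) : traceNorm (A + B) ≤ traceNorm A + traceNorm B := by
  obtain ⟨U, hU, hAB⟩ := exists_re_trace_mul_eq_traceNorm (A + B)
  rw [← hAB, mul_add, trace_add, Complex.add_re]
  exact add_le_add (re_trace_mul_le_traceNorm hU A) (re_trace_mul_le_traceNorm hU B)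

lemma Matrix.norm_trace_mul_le (X Y : Matrix n n ℂ) :
    ‖(X * Y).trace‖ ≤ √(X * Xᴴ).trace.re * √(Yᴴ * Y).trace.re := by
  let := toMatrixSeminormedAddCommGroup (1 : Matrix n n ℂ) PosSemidef.one
  let := toMatrixInnerProductSpace (1 : Matrix n n ℂ) PosSemidef.one
  have h := norm_inner_le_norm (𝕜 := ℂ) Yᴴ X
  rw [norm_eq_sqrt_re_inner (𝕜 := ℂ) X, norm_eq_sqrt_re_inner (𝕜 := ℂ) Yᴴ] at h
  change ‖(X * 1 * Yᴴᴴ).trace‖ ≤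
    √(RCLike.re (Yᴴ * 1 * Yᴴᴴ).trace) * √(RCLike.re (X * 1 * Xᴴ).trace) at h
  rw [mul_comm]
  simpa using h

lemma traceNorm_mul_le (A B : Matrix n n ℂ) :
    traceNorm (A * B) ≤ √(A * Aᴴ).trace.re * √(Bᴴ * B).trace.re := by
  obtain ⟨U, hU, hAB⟩ := exists_re_trace_mul_eq_traceNorm (A * B)
  have hUA : (U * A * (U * A)ᴴ).trace = (A * Aᴴ).trace := by
    rw [conjTranspose_mul, ← star_eq_conjTranspose U, ← mul_assoc, mul_assoc U,
      trace_mul_mul_star_of_mem_unitaryGroup hU]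
  calc traceNorm (A * B) = (U * A * B).trace.re := by rw [← hAB, mul_assoc]
    _ ≤ ‖(U * A * B).trace‖ := Complex.re_le_norm _
    _ ≤ _ := hUA ▸ norm_trace_mul_le (U * A) B

lemma traceNorm_conjStarAlgAut_diagonal (u : unitaryGroup n ℂ) (d : n → ℂ) :
    traceNorm (Unitary.conjStarAlgAut ℂ _ u (diagonal d)) = ∑ i, ‖d i‖ := by
  set e : n → ℂ := fun i => Complex.exp ((d i).arg * Complex.I)
  have he : diagonal e ∈ unitaryGroup n ℂ :=
    diagonal_mem_unitaryGroup fun i => Complex.norm_exp_ofReal_mul_I _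
  refine traceNorm_eq_sum_of_eq_mul_diagonal_mul (mul_mem u.2 he) u.2 (fun i => norm_nonneg _) ?_
  rw [Unitary.conjStarAlgAut_apply, mul_assoc (u : Matrix n n ℂ) (diagonal e),
    diagonal_mul_diagonal]
  congr 3
  funext i
  rw [mul_comm]
  exact (Complex.norm_mul_exp_arg_mul_I (d i)).symm

lemma sum_norm_diag_conjStarAlgAut_le_traceNorm (u : unitaryGroup n ℂ) (M : Matrix n n ℂ) :
    ∑ i, ‖Unitary.conjStarAlgAut ℂ _ u M i i‖ ≤ traceNorm M := by
  set N := Unitary.conjStarAlgAut ℂ _ u M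
  set e : n → ℂ := fun i => Complex.exp (↑(-(N i i).arg) * Complex.I)
  have he : diagonal e ∈ unitaryGroup n ℂ :=
    diagonal_mem_unitaryGroup fun i => Complex.norm_exp_ofReal_mul_I _
  have hphase (i : n) : e i * N i i = ‖N i i‖ := by
    conv_lhs => rw [← Complex.norm_mul_exp_arg_mul_I (N i i)]
    rw [mul_left_comm, ← Complex.exp_add]
    simp
  have hU : star (u : Matrix n n ℂ) * diagonal e * u ∈ unitaryGroup n ℂ :=
    mul_mem (mul_mem (Unitary.star_mem u.2) he) u.2
  have htr : (star (u : Matrix n n ℂ) * diagonal e * u * M).trace = (diagonal e * N).trace := by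
    rw [mul_assoc, mul_assoc, trace_mul_comm]
    simp only [N, Unitary.conjStarAlgAut_apply, mul_assoc]
  calc ∑ i, ‖N i i‖ = (star (u : Matrix n n ℂ) * diagonal e * u * M).trace.re := by
        rw [htr, trace, Complex.re_sum]
        simp [diagonal_mul, hphase]
    _ ≤ traceNorm M := re_trace_mul_le_traceNorm hU M

end TraceNorm

section PositivePart

open Matrix

variable {n : Type*} [Fintype n] [DecidableEq n]

lemma Matrix.isStarProjection_diagonal {d : n → ℂ} (hd : ∀ i, d i = 0 ∨ d i = 1) :
    IsStarProjection (diagonal d) := by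
  refine ⟨?_, ?_⟩
  · rw [IsIdempotentElem, diagonal_mul_diagonal]
    congr 1
    funext i
    rcases hd i with h | h <;> simp [h]
  · rw [IsSelfAdjoint, star_eq_conjTranspose, diagonal_conjTranspose]
    congr 1
    funext i
    rcases hd i with h | h <;> simp [h]

lemma Matrix.IsHermitian.exists_isStarProjection_traceNorm_eq {M : Matrix n n ℂ}
    (hM : M.IsHermitian) :
    ∃ P, IsStarProjection P ∧ traceNorm M = 2 * (P * M).trace.re - M.trace.re := by
  set f := Unitary.conjStarAlgAut ℂ (Matrix n n ℂ) hM.eigenvectorUnitary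
  set κ := hM.eigenvalues
  set g : n → ℂ := fun i => if 0 < κ i then 1 else 0
  have hf (X : Matrix n n ℂ) : (f X).trace = X.trace :=
    trace_mul_mul_star_of_mem_unitaryGroup hM.eigenvectorUnitary.2 X
  have hMf : M = f (diagonal fun i => (κ i : ℂ)) := hM.spectral_theorem
  refine ⟨f (diagonal g), (isStarProjection_diagonal fun i => ?_).map f, ?_⟩
  · by_cases h : 0 < κ i <;> simp [g, h]
  rw [hMf, ← map_mul, hf, hf, traceNorm_conjStarAlgAut_diagonal, diagonal_mul_diagonal,
    trace_diagonal, trace_diagonal, Complex.re_sum, Complex.re_sum, Finset.mul_sum,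
    ← Finset.sum_sub_distrib]
  refine Finset.sum_congr rfl fun i _ => ?_
  by_cases h : 0 < κ i
  · simp only [Complex.norm_real, Real.norm_eq_abs, abs_of_pos h, h, ↓reduceIte, one_mul,
      Complex.ofReal_re, g]
    ring
  · simp [g, h, abs_of_nonpos (not_lt.mp h)]

lemma Matrix.re_trace_mul_le_of_isStarProjection {P A : Matrix n n ℂ} (hP : IsStarProjection P)
    (hA : A.PosSemidef) : (P * A).trace.re ≤ A.trace.re := by
  have := re_trace_mul_nonneg_of_isStarProjection hP.one_sub hA
  rw [sub_mul, one_mul, trace_sub, Complex.sub_re] at this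
  linarith

end PositivePart

section PowersStormer

open Matrix

variable {n : Type*} [Fintype n] [DecidableEq n] {A B : Matrix n n ℂ}

lemma Matrix.IsHermitian.re_trace_mul_self {C : Matrix n n ℂ} (hC : C.IsHermitian) :
    (C * C).trace.re = ∑ i, hC.eigenvalues i ^ 2 := by
  conv_lhs => rw [hC.spectral_theorem]
  rw [← map_mul, Unitary.conjStarAlgAut_apply,
    trace_mul_mul_star_of_mem_unitaryGroup hC.eigenvectorUnitary.2, diagonal_mul_diagonal,
    trace_diagonal, Complex.re_sum]
  simp [sq]

/-- In an eigenbasis of `A - B`, the identity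
`2 (A * A - B * B) = (A - B) (A + B) + (A + B) (A - B)` makes the diagonal of `A * A - B * B`
equal to `μ i (A + B) i i`, and `|μ i| ≤ (A + B) i i` because `(A + B) ± (A - B)` is positive. -/
lemma sq_le_norm_conjStarAlgAut_mul_self_sub_mul_self (hA : A.PosSemidef) (hB : B.PosSemidef)
    (u : unitaryGroup n ℂ) {μ : n → ℝ}
    (hu : Unitary.conjStarAlgAut ℂ _ u (A - B) = diagonal fun i => (μ i : ℂ)) (i : n) :
    μ i ^ 2 ≤ ‖Unitary.conjStarAlgAut ℂ _ u (A * A - B * B) i i‖ := by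
  set f := Unitary.conjStarAlgAut ℂ (Matrix n n ℂ) u
  have hfA : 0 ≤ (f A i i).re :=
    (Complex.nonneg_iff.mp (hA.mul_mul_conjTranspose_same (u : Matrix n n ℂ)).diag_nonneg).1
  have hfB : 0 ≤ (f B i i).re :=
    (Complex.nonneg_iff.mp (hB.mul_mul_conjTranspose_same (u : Matrix n n ℂ)).diag_nonneg).1
  have hdiag : f (A * A - B * B) i i = μ i * (f A i i + f B i i) := by
    have h2 : (A * A - B * B) + (A * A - B * B) = (A - B) * (A + B) + (A + B) * (A - B) := by
      noncomm_ring
    have := congrArg (fun X => f X i i) h2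
    simp only [map_add, map_mul, hu, Matrix.add_apply, diagonal_mul, mul_diagonal] at this
    linear_combination this / 2
  have hμ : μ i = (f A i i).re - (f B i i).re := by
    simpa using (congrArg Complex.re (congrFun (congrFun hu i) i)).symm
  have habs : |μ i| ≤ (f A i i + f B i i).re := by
    rw [Complex.add_re, abs_le]
    constructor <;> linarith
  calc μ i ^ 2 = |μ i| * |μ i| := by rw [abs_mul_abs_self, sq]
    _ ≤ |μ i| * ‖f A i i + f B i i‖ :=
      mul_le_mul_of_nonneg_left (habs.trans (Complex.re_le_norm _)) (abs_nonneg _)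
    _ = ‖f (A * A - B * B) i i‖ := by rw [hdiag, norm_mul, Complex.norm_real, Real.norm_eq_abs]

lemma re_trace_sub_mul_sub_le_traceNorm (hA : A.PosSemidef) (hB : B.PosSemidef) :
    ((A - B) * (A - B)).trace.re ≤ traceNorm (A * A - B * B) := by
  have hC := hA.1.sub hB.1
  rw [hC.re_trace_mul_self]
  calc ∑ i, hC.eigenvalues i ^ 2
      ≤ ∑ i, ‖Unitary.conjStarAlgAut ℂ _ (star hC.eigenvectorUnitary) (A * A - B * B) i i‖ :=
        Finset.sum_le_sum fun i _ => sq_le_norm_conjStarAlgAut_mul_self_sub_mul_self hA hB _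
          hC.conjStarAlgAut_star_eigenvectorUnitary i
    _ ≤ traceNorm (A * A - B * B) := sum_norm_diag_conjStarAlgAut_le_traceNorm _ _

end PowersStormer

section FuchsVanDeGraaf

open Matrix

variable {n : Type*} [Fintype n] [DecidableEq n]

lemma traceNorm_mul_mul_le_of_isStarProjection {A B P : Matrix n n ℂ} (hA : A.IsHermitian)
    (hB : B.IsHermitian) (hP : IsStarProjection P) :
    traceNorm (A * P * B) ≤ √(P * (A * A)).trace.re * √(P * (B * B)).trace.re := by
  have hPH : Pᴴ = P := hP.isSelfAdjoint
  have hPP : P * P = P := hP.isIdempotentElem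
  have hAP : (A * P * (A * P)ᴴ).trace = (P * (A * A)).trace := by
    rw [conjTranspose_mul, hPH, hA.eq, mul_assoc, ← mul_assoc P, hPP, trace_mul_comm, mul_assoc]
  have hPB : ((P * B)ᴴ * (P * B)).trace = (P * (B * B)).trace := by
    rw [conjTranspose_mul, hPH, hB.eq, mul_assoc, ← mul_assoc P, hPP, trace_mul_comm, mul_assoc]
  calc traceNorm (A * P * B) = traceNorm (A * P * (P * B)) := by
        rw [← mul_assoc (A * P) P B, mul_assoc A P P, hPP]
    _ ≤ _ := by simpa only [hAP, hPB] using traceNorm_mul_le (A * P) (P * B)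

lemma traceNorm_mul_le_of_isStarProjection {A B P : Matrix n n ℂ} (hA : A.IsHermitian)
    (hB : B.IsHermitian) (hP : IsStarProjection P) :
    traceNorm (A * B) ≤ √(P * (A * A)).trace.re * √(P * (B * B)).trace.re +
      √((1 - P) * (A * A)).trace.re * √((1 - P) * (B * B)).trace.re :=
  calc traceNorm (A * B) = traceNorm (A * P * B + A * (1 - P) * B) := by
        rw [← add_mul, ← mul_add, add_sub_cancel, mul_one]
    _ ≤ _ := (traceNorm_add_le _ _).trans <| add_le_add
      (traceNorm_mul_mul_le_of_isStarProjection hA hB hP)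
      (traceNorm_mul_mul_le_of_isStarProjection hA hB hP.one_sub)

lemma sq_sub_add_sq_bhattacharyya_le_one {p q : ℝ} (hp₀ : 0 ≤ p) (hp₁ : p ≤ 1) (hq₀ : 0 ≤ q)
    (hq₁ : q ≤ 1) : (p - q) ^ 2 + (√p * √q + √(1 - p) * √(1 - q)) ^ 2 ≤ 1 := by
  set a := √p
  set b := √q
  set c := √(1 - p)
  set d := √(1 - q)
  have ha : a ^ 2 = p := Real.sq_sqrt hp₀
  have hb : b ^ 2 = q := Real.sq_sqrt hq₀
  have hac : a ^ 2 + c ^ 2 = 1 := by rw [ha, Real.sq_sqrt (by linarith)]; ring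
  have hbd : b ^ 2 + d ^ 2 = 1 := by rw [hb, Real.sq_sqrt (by linarith)]; ring
  -- Lagrange's identity `(a² + c²)(b² + d²) = (ab + cd)² + (ad - bc)² = (ad + bc)² + (ab - cd)²`.
  have h₁ : (a * b + c * d) ^ 2 + (a * d - b * c) ^ 2 = 1 := by
    linear_combination (b ^ 2 + d ^ 2) * hac + hbd
  have h₂ : (a * d + b * c) ^ 2 ≤ 1 := by
    nlinarith [sq_nonneg (a * b - c * d)]
  have h₃ : p - q = (a * d - b * c) * (a * d + b * c) := by
    rw [← ha, ← hb]
    linear_combination b ^ 2 * hac - a ^ 2 * hbd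
  rw [h₃]
  nlinarith [mul_le_mul_of_nonneg_left h₂ (sq_nonneg (a * d - b * c))]

variable {ρ σ : Matrix n n ℂ}

lemma one_sub_sqrt_fidelity_le_half_traceNorm_sub (hρ : ρ.PosSemidef) (hσ : σ.PosSemidef)
    (h1 : ρ.trace = 1) (h2 : σ.trace = 1) :
    1 - √(fidelity hρ hσ) ≤ 1 / 2 * traceNorm (ρ - σ) := by
  set A := hρ.sqrt
  set B := hσ.sqrt
  have hA : A * A = ρ := hρ.sqrt_mul_self
  have hB : B * B = σ := hσ.sqrt_mul_self
  have hsqrtF : √(fidelity hρ hσ) = traceNorm (A * B) := Real.sqrt_sq (traceNorm_nonneg _)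
  have hPS := re_trace_sub_mul_sub_le_traceNorm hρ.posSemidef_sqrt hσ.posSemidef_sqrt
  have hexpand : ((A - B) * (A - B)).trace.re = 2 - 2 * (A * B).trace.re := by
    rw [show (A - B) * (A - B) = A * A + B * B - (A * B + B * A) by noncomm_ring, trace_sub,
      trace_add, trace_add, trace_mul_comm B A, hA, hB, h1, h2]
    simp only [Complex.sub_re, Complex.add_re, Complex.one_re]
    ring
  rw [hA, hB] at hPS
  linarith [re_trace_le_traceNorm (A * B)]

lemma half_traceNorm_sub_le_sqrt_one_sub_fidelity (hρ : ρ.PosSemidef) (hσ : σ.PosSemidef)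
    (h1 : ρ.trace = 1) (h2 : σ.trace = 1) :
    1 / 2 * traceNorm (ρ - σ) ≤ √(1 - fidelity hρ hσ) := by
  obtain ⟨P, hP, hPρσ⟩ := (hρ.1.sub hσ.1).exists_isStarProjection_traceNorm_eq
  set p := (P * ρ).trace.re
  set q := (P * σ).trace.re
  have hsplit := traceNorm_mul_le_of_isStarProjection hρ.posSemidef_sqrt.1
    hσ.posSemidef_sqrt.1 hP
  simp only [hρ.sqrt_mul_self, hσ.sqrt_mul_self, sub_mul, one_mul, trace_sub, h1, h2,
    Complex.sub_re, Complex.one_re] at hsplit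
  have hp₁ : p ≤ 1 := by simpa [h1] using re_trace_mul_le_of_isStarProjection hP hρ
  have hq₁ : q ≤ 1 := by simpa [h2] using re_trace_mul_le_of_isStarProjection hP hσ
  have hF : fidelity hρ hσ ≤ (√p * √q + √(1 - p) * √(1 - q)) ^ 2 :=
    pow_le_pow_left₀ (traceNorm_nonneg _) hsplit 2
  have hclassical := sq_sub_add_sq_bhattacharyya_le_one
    (re_trace_mul_nonneg_of_isStarProjection hP hρ) hp₁
    (re_trace_mul_nonneg_of_isStarProjection hP hσ) hq₁
  have htraceNorm : 1 / 2 * traceNorm (ρ - σ) = p - q := by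
    rw [hPρσ, Matrix.mul_sub, trace_sub, trace_sub, h1, h2]
    simp only [Complex.sub_re]
    ring
  rw [htraceNorm]
  exact Real.le_sqrt_of_sq_le (by linarith)

end FuchsVanDeGraaf

/-- Fuchs–van de Graaf inequalities:
`1 − √F(ρ,σ) ≤ ½‖ρ − σ‖₁ ≤ √(1 − F(ρ,σ))` for any two states `ρ, σ`. -/
theorem stmt_5 {n : Type*} [Fintype n] [DecidableEq n]
    (ρ σ : Matrix n n ℂ) (hρ : ρ.PosSemidef) (hσ : σ.PosSemidef)
    (h1 : ρ.trace = 1) (h2 : σ.trace = 1) :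
    1 - Real.sqrt (fidelity hρ hσ) ≤ (1 / 2) * traceNorm (ρ - σ) ∧
      (1 / 2) * traceNorm (ρ - σ) ≤ Real.sqrt (1 - fidelity hρ hσ) :=
  ⟨one_sub_sqrt_fidelity_le_half_traceNorm_sub hρ hσ h1 h2,
    half_traceNorm_sub_le_sqrt_one_sub_fidelity hρ hσ h1 h2⟩
end

section
/- Let f be a real-valued function on the set of quantum states of a finite-dimensional Hilbert space satisfying the LAA inequalities |f(pρ+(1−p)σ) − p f(ρ) − (1−p)f(σ)| ≤ (a+b)(p) for nondecreasing vanishing-at-zero functions a,b on [0,1/2], and suppose f is bounded on the set of pure states: sup over unit vectors φ of |f(|φ⟩⟨φ|)| ≤ C. Then f is bounded on the set of states of rank at most m for every m, with |f(ρ)| ≤ C_m for a constant C_m depending only on C, m, a and b. -/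
/-!
Diagonalising a state of rank at most `m` writes it as a convex combination of at most `m` pure
states. The LAA inequalities and the monotonicity of `a`, `b` give
`|f (p • x + (1 - p) • y)| ≤ p |f x| + (1 - p) |f y| + max (a (1/2)) (b (1/2))` for every
`p ∈ [0, 1]`, so splitting off one pure state at a time raises the bound `C` on pure states by at
most that constant per additional state.
-/

open scoped ComplexOrder
open Finset Matrix

section AlmostAffine

variable {E : Type*} [AddCommGroup E] [Module ℝ E]

def LAAOn (S : Set E) (f : E → ℝ) (a b : ℝ → ℝ) : Prop :=
  ∀ x ∈ S, ∀ y ∈ S, ∀ p ∈ Set.Icc (0 : ℝ) 1,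
    p * f x + (1 - p) * f y - a p ≤ f (p • x + (1 - p) • y) ∧
      f (p • x + (1 - p) • y) ≤ p * f x + (1 - p) * f y + b p

variable {S : Set E} {f : E → ℝ} {a b : ℝ → ℝ}

theorem LAAOn.abs_apply_smul_add_smul_le_of_le_half (hf : LAAOn S f a b)
    (hamono : MonotoneOn a (Set.Icc 0 (1 / 2))) (hbmono : MonotoneOn b (Set.Icc 0 (1 / 2)))
    {x y : E} (hx : x ∈ S) (hy : y ∈ S) {p : ℝ} (hp : p ∈ Set.Icc (0 : ℝ) (1 / 2)) :
    |f (p • x + (1 - p) • y)| ≤ p * |f x| + (1 - p) * |f y| + max (a (1 / 2)) (b (1 / 2)) := by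
  obtain ⟨hp0, hp1⟩ := hp
  have hhalf : (1 / 2 : ℝ) ∈ Set.Icc (0 : ℝ) (1 / 2) := by norm_num
  have ha : a p ≤ a (1 / 2) := hamono ⟨hp0, hp1⟩ hhalf hp1
  have hb : b p ≤ b (1 / 2) := hbmono ⟨hp0, hp1⟩ hhalf hp1
  have hconv : |p * f x + (1 - p) * f y| ≤ p * |f x| + (1 - p) * |f y| := by
    calc |p * f x + (1 - p) * f y| ≤ |p * f x| + |(1 - p) * f y| := abs_add_le _ _
      _ = p * |f x| + (1 - p) * |f y| := by
        rw [abs_mul, abs_mul, abs_of_nonneg hp0, abs_of_nonneg (by linarith : (0 : ℝ) ≤ 1 - p)]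
  obtain ⟨hlo, hhi⟩ := hf x hx y hy p ⟨hp0, by linarith⟩
  rw [abs_le] at hconv ⊢
  constructor <;>
    linarith [le_max_left (a (1 / 2)) (b (1 / 2)), le_max_right (a (1 / 2)) (b (1 / 2))]

theorem LAAOn.abs_apply_smul_add_smul_le (hf : LAAOn S f a b)
    (hamono : MonotoneOn a (Set.Icc 0 (1 / 2))) (hbmono : MonotoneOn b (Set.Icc 0 (1 / 2)))
    {x y : E} (hx : x ∈ S) (hy : y ∈ S) {p : ℝ} (hp : p ∈ Set.Icc (0 : ℝ) 1) :
    |f (p • x + (1 - p) • y)| ≤ p * |f x| + (1 - p) * |f y| + max (a (1 / 2)) (b (1 / 2)) := by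
  rcases le_total p (1 / 2) with hp1 | hp1
  · exact hf.abs_apply_smul_add_smul_le_of_le_half hamono hbmono hx hy ⟨hp.1, hp1⟩
  · -- `a` and `b` are only controlled on `[0, 1/2]`, so swap the two points
    have := hf.abs_apply_smul_add_smul_le_of_le_half hamono hbmono hy hx (p := 1 - p)
      ⟨by linarith [hp.2], by linarith⟩
    rwa [sub_sub_cancel, add_comm, add_comm ((1 - p) * _)] at this

theorem abs_apply_centerMass_le {ι : Type*} (hS : Convex ℝ S) {C M : ℝ} (hM : 0 ≤ M)
    (hmix : ∀ x ∈ S, ∀ y ∈ S, ∀ p ∈ Set.Icc (0 : ℝ) 1,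
      |f (p • x + (1 - p) • y)| ≤ p * |f x| + (1 - p) * |f y| + M)
    {w : ι → ℝ} {z : ι → E} {t : Finset ι} (ht : t.Nonempty) (hw : ∀ i ∈ t, 0 < w i)
    (hz : ∀ i ∈ t, z i ∈ S) (hC : ∀ i ∈ t, |f (z i)| ≤ C) :
    |f (t.centerMass w z)| ≤ C + (#t - 1) * M := by
  classical
  induction ht using Finset.Nonempty.cons_induction with
  | singleton i =>
    simpa [centerMass_singleton _ _ (hw i (mem_singleton_self i)).ne'] using hC i (by simp)
  | cons i t hi ht ih =>
    simp only [mem_cons, forall_eq_or_imp] at hw hz hC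
    have hW : 0 < ∑ j ∈ t, w j := sum_pos (fun j hj ↦ hw.2 j hj) ht
    have hwi : 0 < w i + ∑ j ∈ t, w j := add_pos hw.1 hW
    have hq : (∑ j ∈ t, w j) / (w i + ∑ j ∈ t, w j) = 1 - w i / (w i + ∑ j ∈ t, w j) := by
      field_simp; ring
    set p := w i / (w i + ∑ j ∈ t, w j)
    have hp : p ∈ Set.Icc (0 : ℝ) 1 :=
      ⟨div_nonneg hw.1.le hwi.le, (div_le_one hwi).2 (le_add_of_nonneg_right hW.le)⟩
    have hmem : t.centerMass w z ∈ S := hS.centerMass_mem (fun j hj ↦ (hw.2 j hj).le) hW hz.2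
    have hrest := ih hw.2 hz.2 hC.2
    have hcard : (1 : ℝ) ≤ #t := by exact_mod_cast ht.card_pos
    rw [cons_eq_insert, centerMass_insert i t z hi hW.ne', hq, card_insert_of_notMem hi]
    calc |f (p • z i + (1 - p) • t.centerMass w z)|
        ≤ p * |f (z i)| + (1 - p) * |f (t.centerMass w z)| + M := hmix _ hz.1 _ hmem p hp
      _ ≤ p * C + (1 - p) * (C + (#t - 1) * M) + M := by
        have : 0 ≤ 1 - p := sub_nonneg.2 hp.2
        gcongr
        exacts [hp.1, hC.1]
      _ ≤ C + ((#t + 1 : ℕ) - 1) * M := by push_cast; nlinarith [hp.1, mul_nonneg hp.1 hM]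

end AlmostAffine

namespace Matrix

variable {n 𝕜 : Type*} [Fintype n] [RCLike 𝕜]

theorem trace_vecMulVec_self_star (φ : n → 𝕜) :
    (vecMulVec φ (star φ)).trace = ((∑ i, ‖φ i‖ ^ 2 : ℝ) : 𝕜) := by
  simp [trace_vecMulVec, dotProduct, RCLike.mul_conj]

variable (n 𝕜) in
def densityMatrices : Set (Matrix n n 𝕜) := {ρ | ρ.PosSemidef ∧ ρ.trace = 1}

theorem convex_densityMatrices : Convex ℝ (densityMatrices n 𝕜) := by
  rintro x ⟨hx, hxt⟩ y ⟨hy, hyt⟩ p q hp hq hpq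
  refine ⟨(hx.smul hp).add (hy.smul hq), ?_⟩
  rw [trace_add, trace_smul, trace_smul, hxt, hyt, ← add_smul, hpq, one_smul]

theorem vecMulVec_self_star_mem_densityMatrices {φ : n → 𝕜} (hφ : ∑ i, ‖φ i‖ ^ 2 = 1) :
    vecMulVec φ (star φ) ∈ densityMatrices n 𝕜 :=
  ⟨posSemidef_vecMulVec_self_star φ, by rw [trace_vecMulVec_self_star, hφ, RCLike.ofReal_one]⟩

theorem IsHermitian.eq_sum_eigenvalues_smul_vecMulVec [DecidableEq n] {A : Matrix n n 𝕜}
    (hA : A.IsHermitian) :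
    A = ∑ i, hA.eigenvalues i •
      vecMulVec (hA.eigenvectorBasis i) (star ⇑(hA.eigenvectorBasis i)) := by
  ext j k
  conv_lhs => rw [hA.spectral_theorem]
  rw [Unitary.conjStarAlgAut_apply, mul_apply, sum_apply]
  refine sum_congr rfl fun i _ ↦ ?_
  simp [mul_diagonal, vecMulVec_apply, RCLike.real_smul_eq_coe_mul]
  ring

theorem PosSemidef.exists_eq_sum_smul_vecMulVec [DecidableEq n] {ρ : Matrix n n 𝕜}
    (hρ : ρ.PosSemidef) :
    ∃ (t : Finset n) (w : n → ℝ) (ψ : n → n → 𝕜), #t = ρ.rank ∧ (∀ i ∈ t, 0 < w i) ∧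
      (∀ i, ∑ j, ‖ψ i j‖ ^ 2 = 1) ∧ ρ = ∑ i ∈ t, w i • vecMulVec (ψ i) (star (ψ i)) := by
  refine ⟨univ.filter (hρ.1.eigenvalues · ≠ 0), hρ.1.eigenvalues, fun i ↦ hρ.1.eigenvectorBasis i,
    ?_, fun i hi ↦ ?_, fun i ↦ ?_, ?_⟩
  · rw [hρ.1.rank_eq_card_non_zero_eigs, Fintype.card_subtype]
  · exact (hρ.eigenvalues_nonneg i).lt_of_ne (mem_filter.1 hi).2.symm
  · have := hρ.1.eigenvectorBasis.orthonormal.1 i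
    rwa [EuclideanSpace.norm_eq, Real.sqrt_eq_one] at this
  · rw [sum_filter_of_ne fun i _ h ↦ left_ne_zero_of_smul h]
    exact hρ.1.eq_sum_eigenvalues_smul_vecMulVec

end Matrix

theorem stmt_8_general (C : ℝ) (m : ℕ) (a b : ℝ → ℝ)
    (hapos : ∀ p ∈ Set.Icc (0 : ℝ) 1, 0 ≤ a p)
    (hamono : MonotoneOn a (Set.Icc 0 (1 / 2)))
    (hbmono : MonotoneOn b (Set.Icc 0 (1 / 2))) :
    ∃ Cm : ℝ, ∀ (n : Type) [Fintype n] [DecidableEq n] (f : Matrix n n ℂ → ℝ),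
      (∀ ρ σ : Matrix n n ℂ, ρ.PosSemidef → σ.PosSemidef → ρ.trace = 1 → σ.trace = 1 →
        ∀ p ∈ Set.Icc (0 : ℝ) 1,
          p * f ρ + (1 - p) * f σ - a p ≤ f (p • ρ + (1 - p) • σ) ∧
            f (p • ρ + (1 - p) • σ) ≤ p * f ρ + (1 - p) * f σ + b p) →
      (∀ φ : n → ℂ, ∑ i, ‖φ i‖ ^ 2 = 1 → |f (Matrix.vecMulVec φ (star φ))| ≤ C) →
      ∀ ρ : Matrix n n ℂ, ρ.PosSemidef → ρ.trace = 1 → ρ.rank ≤ m → |f ρ| ≤ Cm := by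
  set M := max (a (1 / 2)) (b (1 / 2))
  have hM : 0 ≤ M := (hapos _ (by norm_num)).trans (le_max_left _ _)
  refine ⟨C + m * M, fun n _ _ f hlaa hpure ρ hρ hρt hrank ↦ ?_⟩
  have hf : LAAOn (densityMatrices n ℂ) f a b := fun x hx y hy ↦ hlaa x y hx.1 hy.1 hx.2 hy.2
  obtain ⟨t, w, ψ, ht, hw, hψ, rfl⟩ := hρ.exists_eq_sum_smul_vecMulVec
  have hw1 : ∑ i ∈ t, w i = 1 := by
    simp only [trace_sum, trace_smul, trace_vecMulVec_self_star, hψ, RCLike.ofReal_one,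
      Complex.real_smul, mul_one] at hρt
    exact_mod_cast hρt
  have hne : t.Nonempty := nonempty_of_sum_ne_zero (by rw [hw1]; exact one_ne_zero)
  have hrank' : (#t : ℝ) ≤ m := by rw [ht]; exact_mod_cast hrank
  rw [← centerMass_eq_of_sum_1 _ _ hw1]
  calc |f (t.centerMass w fun i ↦ vecMulVec (ψ i) (star (ψ i)))|
      ≤ C + (#t - 1) * M :=
        abs_apply_centerMass_le (convex_densityMatrices (𝕜 := ℂ)) hM
          (fun x hx y hy p hp ↦ hf.abs_apply_smul_add_smul_le hamono hbmono hx hy hp) hne hw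
          (fun i _ ↦ vecMulVec_self_star_mem_densityMatrices (hψ i)) (fun i _ ↦ hpure _ (hψ i))
    _ ≤ C + m * M := by gcongr; linarith

/-- An LAA function on the state space that is bounded (by `C`) on pure states is bounded on
the set of states of rank at most `m`, with a constant depending only on `C`, `m`, `a`, `b`. -/
theorem stmt_8 (C : ℝ) (m : ℕ) (a b : ℝ → ℝ)
    (ha0 : a 0 = 0) (hb0 : b 0 = 0)
    (hapos : ∀ p ∈ Set.Icc (0 : ℝ) 1, 0 ≤ a p)
    (hbpos : ∀ p ∈ Set.Icc (0 : ℝ) 1, 0 ≤ b p)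
    (hamono : MonotoneOn a (Set.Icc 0 (1 / 2)))
    (hbmono : MonotoneOn b (Set.Icc 0 (1 / 2))) :
    ∃ Cm : ℝ, ∀ (n : Type) [Fintype n] [DecidableEq n] (f : Matrix n n ℂ → ℝ),
      (∀ ρ σ : Matrix n n ℂ, ρ.PosSemidef → σ.PosSemidef → ρ.trace = 1 → σ.trace = 1 →
        ∀ p ∈ Set.Icc (0 : ℝ) 1,
          p * f ρ + (1 - p) * f σ - a p ≤ f (p • ρ + (1 - p) • σ) ∧
            f (p • ρ + (1 - p) • σ) ≤ p * f ρ + (1 - p) * f σ + b p) →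
      (∀ φ : n → ℂ, ∑ i, ‖φ i‖ ^ 2 = 1 → |f (Matrix.vecMulVec φ (star φ))| ≤ C) →
      ∀ ρ : Matrix n n ℂ, ρ.PosSemidef → ρ.trace = 1 → ρ.rank ≤ m → |f ρ| ≤ Cm :=
  stmt_8_general C m a b hapos hamono hbmono
end

section
/- Let f be a function on a convex set of states satisfying f(pρ+(1−p)σ) ≥ p f(ρ) + (1−p) f(σ) − a(p) and f(pρ+(1−p)σ) ≤ p f(ρ) + (1−p) f(σ) + b(p) for all states ρ,σ in the set and p∈[0,1], where a,b are bounded on [0,1]. If f is finite at states ρ₁,…,ρ_n, then f is bounded on the convex hull of {ρ₁,…,ρ_n}: for every ρ in the convex hull, min_i f(ρ_i) − (n−1)·sup a ≤ f(ρ) ≤ max_i f(ρ_i) + (n−1)·sup b. -/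
open scoped ComplexOrder

lemma stmt_14_aux {E : Type*} [AddCommGroup E] [Module ℝ E]
    (S₀ : Set E) (hS₀ : Convex ℝ S₀) (f : E → ℝ) (a b : ℝ → ℝ)
    (hapos : ∀ p ∈ Set.Icc (0 : ℝ) 1, 0 ≤ a p)
    (hbpos : ∀ p ∈ Set.Icc (0 : ℝ) 1, 0 ≤ b p)
    (haB : BddAbove (a '' Set.Icc (0 : ℝ) 1))
    (hbB : BddAbove (b '' Set.Icc (0 : ℝ) 1))
    (hLAA1 : ∀ ρ ∈ S₀, ∀ σ ∈ S₀, ∀ p ∈ Set.Icc (0 : ℝ) 1,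
      p * f ρ + (1 - p) * f σ - a p ≤ f (p • ρ + (1 - p) • σ))
    (hLAA2 : ∀ ρ ∈ S₀, ∀ σ ∈ S₀, ∀ p ∈ Set.Icc (0 : ℝ) 1,
      f (p • ρ + (1 - p) • σ) ≤ p * f ρ + (1 - p) * f σ + b p) :
    ∀ k (ρs : Fin (k + 1) → E), (∀ i, ρs i ∈ S₀) →
      ∀ ρ ∈ convexHull ℝ (Set.range ρs),
        (Finset.univ.inf' Finset.univ_nonempty fun i => f (ρs i)) -
            (k : ℝ) * sSup (a '' Set.Icc (0 : ℝ) 1) ≤ f ρ ∧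
          f ρ ≤ (Finset.univ.sup' Finset.univ_nonempty fun i => f (ρs i)) +
            (k : ℝ) * sSup (b '' Set.Icc (0 : ℝ) 1) := by
  set A := sSup (a '' Set.Icc (0 : ℝ) 1) with hAdef
  set B := sSup (b '' Set.Icc (0 : ℝ) 1) with hBdef
  have hA : ∀ p ∈ Set.Icc (0 : ℝ) 1, a p ≤ A := fun p hp => le_csSup haB ⟨p, hp, rfl⟩
  have hB : ∀ p ∈ Set.Icc (0 : ℝ) 1, b p ≤ B := fun p hp => le_csSup hbB ⟨p, hp, rfl⟩
  have h01 : (0 : ℝ) ∈ Set.Icc (0 : ℝ) 1 := ⟨le_refl 0, zero_le_one⟩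
  have hA0 : (0 : ℝ) ≤ A := (hapos 0 h01).trans (hA 0 h01)
  have hB0 : (0 : ℝ) ≤ B := (hbpos 0 h01).trans (hB 0 h01)
  intro k
  induction k with
  | zero =>
    intro ρs hρs ρ hρ
    have hr : Set.range ρs = {ρs 0} := by
      ext x
      constructor
      · rintro ⟨i, rfl⟩
        rw [Fin.eq_zero i]
        rfl
      · rintro rfl; exact ⟨0, rfl⟩
    rw [hr, convexHull_singleton] at hρ
    rcases hρ with rfl
    simp only [Nat.cast_zero, zero_mul, sub_zero, add_zero]
    exact ⟨Finset.inf'_le (fun i => f (ρs i)) (Finset.mem_univ (0 : Fin (0 + 1))),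
      Finset.le_sup' (fun i => f (ρs i)) (Finset.mem_univ (0 : Fin (0 + 1)))⟩
  | succ k IH =>
    intro ρs hρs ρ hρ
    have hrange : Set.range ρs = insert (ρs 0) (Set.range (Fin.tail ρs)) := by
      conv_lhs => rw [← Fin.cons_self_tail ρs]
      exact Fin.range_cons _ _
    rw [hrange, convexHull_insert (Set.range_nonempty _)] at hρ
    rw [mem_convexJoin] at hρ
    obtain ⟨x, hx, z, hz, hseg⟩ := hρ
    rw [Set.mem_singleton_iff] at hx
    subst hx
    obtain ⟨p, q, hp, hq, hpq, rfl⟩ := hseg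
    have hq' : q = 1 - p := by linarith
    subst hq'
    have hzS : z ∈ S₀ := by
      refine convexHull_min ?_ hS₀ hz
      rintro _ ⟨i, rfl⟩
      exact hρs i.succ
    have hpI : p ∈ Set.Icc (0 : ℝ) 1 := ⟨hp, by linarith⟩
    obtain ⟨hz1, hz2⟩ := IH (Fin.tail ρs) (fun i => hρs i.succ) z hz
    have hmin : ∀ i : Fin (k + 2),
        (Finset.univ.inf' Finset.univ_nonempty fun j => f (ρs j)) ≤ f (ρs i) :=
      fun i => Finset.inf'_le _ (Finset.mem_univ i)
    have hmax : ∀ i : Fin (k + 2),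
        f (ρs i) ≤ Finset.univ.sup' Finset.univ_nonempty fun j => f (ρs j) :=
      fun i => Finset.le_sup' (fun j => f (ρs j)) (Finset.mem_univ i)
    have hmin' : (Finset.univ.inf' Finset.univ_nonempty fun j => f (ρs j)) ≤
        Finset.univ.inf' Finset.univ_nonempty fun i => f (Fin.tail ρs i) :=
      Finset.le_inf' _ _ fun i _ => hmin i.succ
    have hmax' : (Finset.univ.sup' Finset.univ_nonempty fun i => f (Fin.tail ρs i)) ≤
        Finset.univ.sup' Finset.univ_nonempty fun j => f (ρs j) :=
      Finset.sup'_le _ _ fun i _ => hmax i.succ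
    have hL1 := hLAA1 (ρs 0) (hρs 0) z hzS p hpI
    have hL2 := hLAA2 (ρs 0) (hρs 0) z hzS p hpI
    have hap := hA p hpI
    have hbp := hB p hpI
    have hm0 := hmin 0
    have hM0 := hmax 0
    push_cast
    constructor
    · nlinarith [mul_nonneg (mul_nonneg hp (Nat.cast_nonneg (α := ℝ) k)) hA0,
        mul_le_mul_of_nonneg_left hz1 (by linarith : (0 : ℝ) ≤ 1 - p),
        mul_le_mul_of_nonneg_left hm0 hp,
        mul_le_mul_of_nonneg_left hmin' (by linarith : (0 : ℝ) ≤ 1 - p)]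
    · nlinarith [mul_nonneg (mul_nonneg hp (Nat.cast_nonneg (α := ℝ) k)) hB0,
        mul_le_mul_of_nonneg_left hz2 (by linarith : (0 : ℝ) ≤ 1 - p),
        mul_le_mul_of_nonneg_left hM0 hp,
        mul_le_mul_of_nonneg_left hmax' (by linarith : (0 : ℝ) ≤ 1 - p)]

/-- An LAA function that is finite at states `ρ₀, …, ρ_k` is bounded on their convex hull:
`min_i f(ρ_i) − k · sup a ≤ f(ρ) ≤ max_i f(ρ_i) + k · sup b` for every `ρ` in the hull
(the family consists of `k + 1` states). -/
theorem stmt_14 {n : Type*} [Fintype n] [DecidableEq n]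
    (S₀ : Set (Matrix n n ℂ)) (hS₀ : Convex ℝ S₀)
    (hstates : ∀ ρ ∈ S₀, ρ.PosSemidef ∧ ρ.trace = 1)
    (f : Matrix n n ℂ → ℝ) (a b : ℝ → ℝ)
    (hapos : ∀ p ∈ Set.Icc (0 : ℝ) 1, 0 ≤ a p)
    (hbpos : ∀ p ∈ Set.Icc (0 : ℝ) 1, 0 ≤ b p)
    (haB : BddAbove (a '' Set.Icc (0 : ℝ) 1))
    (hbB : BddAbove (b '' Set.Icc (0 : ℝ) 1))
    (hLAA1 : ∀ ρ ∈ S₀, ∀ σ ∈ S₀, ∀ p ∈ Set.Icc (0 : ℝ) 1,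
      p * f ρ + (1 - p) * f σ - a p ≤ f (p • ρ + (1 - p) • σ))
    (hLAA2 : ∀ ρ ∈ S₀, ∀ σ ∈ S₀, ∀ p ∈ Set.Icc (0 : ℝ) 1,
      f (p • ρ + (1 - p) • σ) ≤ p * f ρ + (1 - p) * f σ + b p)
    (k : ℕ) (ρs : Fin (k + 1) → Matrix n n ℂ) (hρs : ∀ i, ρs i ∈ S₀)
    (ρ : Matrix n n ℂ) (hρ : ρ ∈ convexHull ℝ (Set.range ρs)) :
    (Finset.univ.inf' Finset.univ_nonempty fun i => f (ρs i)) -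
        (k : ℝ) * sSup (a '' Set.Icc (0 : ℝ) 1) ≤ f ρ ∧
      f ρ ≤ (Finset.univ.sup' Finset.univ_nonempty fun i => f (ρs i)) +
        (k : ℝ) * sSup (b '' Set.Icc (0 : ℝ) 1) := by
  exact stmt_14_aux S₀ hS₀ f a b hapos hbpos haB hbB hLAA1 hLAA2 k ρs hρs ρ hρ
end
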